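/- arXiv:0909.0307 — 2 statements merged into one kernel-verified Lean document; each statement's English description precedes it below -/
import Mathlib

section
/- Let n ≥ 1, m ≥ 0, r ≥ 0 be integers with 2m < 2n + r. Then for every rational number x: x^m · (x+r)^m = Σ_{k=0}^{m} α_k(m,n,r) · Π_{i=0}^{k-1} (n - x - i)(n + x + r - i). -/
/-!
Put `u = x (x + r)` and `c i = (n - i)² + r (n - i)`. Then `(n - x - i)(n + x + r - i) = c i - u`,
so the right-hand side is a Newton interpolation of `u ↦ u ^ m` at the nodes `c 0, …, c m`. These
are distinct because `c i - c j = (j - i)(2n + r - i - j)` and `2m < 2n + r`, and `u ^ m` has degree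
`m`, so everything reduces to `α_k = (-1)ᵏ · u ^ m[c 0, …, c k]`. In the Lagrange form of the divided
difference, this is a term-by-term identity: `C(2n+r, i) · i!`, `C(2k-2n-r, k-i) · (k-i)!` and
`∏_{j ≤ k} (2n + r - i - j)` are, up to sign, the three consecutive blocks of the Pochhammer
symbol `(2n+r-2k)_{2k+1}`.
-/

open Finset

/-- The coefficient `α_k(m,n,r)` from the Newton interpolation:
`α_k(m,n,r) = Σ_{i=0}^{k} C(2n+r, i) · C(2k-2n-r, k-i) · ((n-i)² + r(n-i))^m · (2n+r-2i) / (2n+r-2k)_{2k+1}`,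
where `C(2k-2n-r, k-i)` is the generalized binomial coefficient of the integer `2k-2n-r`
(formalized by `Ring.choose`), and `(a)_{2k+1} = a(a+1)⋯(a+2k)` is the Pochhammer symbol. -/
noncomputable def alphaCoeff (m n r k : ℕ) : ℚ :=
  ∑ i ∈ Finset.range (k + 1),
    ((2 * n + r).choose i : ℚ) *
      ((Ring.choose ((2 * k : ℤ) - 2 * n - r) (k - i) : ℤ) : ℚ) *
      (((n : ℚ) - i) ^ 2 + (r : ℚ) * ((n : ℚ) - i)) ^ m *
      (2 * (n : ℚ) + r - 2 * i) /
      (∏ j ∈ Finset.range (2 * k + 1), (2 * (n : ℚ) + (r : ℚ) - 2 * k + j))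

open Polynomial

section Newton

variable {K : Type*} [Field K]

theorem Lagrange.eval_basis {ι : Type*} [DecidableEq ι] (s : Finset ι) (v : ι → K) (i : ι)
    (x : K) : (Lagrange.basis s v i).eval x = ∏ j ∈ s.erase i, (x - v j) / (v i - v j) := by
  simp only [Lagrange.basis, Lagrange.basisDivisor, eval_prod, eval_mul, eval_C, eval_sub, eval_X]
  exact prod_congr rfl fun _ _ => inv_mul_eq_div _ _

def divDiff (f : K → K) (c : ℕ → K) (k : ℕ) : K :=
  ∑ i ∈ range (k + 1), f (c i) / ∏ j ∈ (range (k + 1)).erase i, (c i - c j)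

theorem prod_erase_div_eq_sum_Ico (c : ℕ → K) (u : K) {i M : ℕ} (hiM : i ≤ M)
    (hc : Set.InjOn c (range (M + 1))) :
    ∏ j ∈ (range (M + 1)).erase i, (u - c j) / (c i - c j) =
      ∑ k ∈ Ico i (M + 1),
        (∏ j ∈ range k, (u - c j)) / ∏ j ∈ (range (k + 1)).erase i, (c i - c j) := by
  induction M, hiM using Nat.le_induction with
  | base =>
    rw [Nat.Ico_succ_singleton, sum_singleton, range_add_one, erase_insert notMem_range_self,
      prod_div_distrib]
  | succ M hiM ih =>
    have hci : ∀ j ≤ M + 1, j ≠ i → c i - c j ≠ 0 := fun j hj hji =>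
      sub_ne_zero.2 fun h => hji (hc (by simp only [coe_range, Set.mem_Iio]; omega)
        (by simp only [coe_range, Set.mem_Iio]; omega) h).symm
    have hQ : ∏ j ∈ (range (M + 1)).erase i, (c i - c j) ≠ 0 :=
      prod_ne_zero_iff.2 fun j hj =>
        hci j (Nat.le_succ_of_le (mem_range_succ_iff.1 (mem_of_mem_erase hj))) (ne_of_mem_erase hj)
    have hM : c i - c (M + 1) ≠ 0 := hci _ le_rfl (by omega)
    have herase : (range (M + 1 + 1)).erase i = insert (M + 1) ((range (M + 1)).erase i) := by
      rw [range_add_one, erase_insert_of_ne (by omega)]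
    -- adding the node `c (M + 1)` multiplies the left side by `1 + (u - c i) / (c i - c (M + 1))`
    rw [sum_Ico_succ_top (by omega), ← ih (hc.mono (by simp)), herase,
      prod_insert (by simp), prod_insert (by simp), prod_div_distrib,
      ← mul_prod_erase (range (M + 1)) (fun j => u - c j) (mem_range.2 (show i < M + 1 by omega))]
    field_simp
    ring

theorem eval_eq_sum_divDiff_mul_prod {p : K[X]} {m : ℕ} (hp : p.natDegree ≤ m) {c : ℕ → K}
    (hc : Set.InjOn c (range (m + 1))) (u : K) :
    p.eval u = ∑ k ∈ range (m + 1), divDiff p.eval c k * ∏ j ∈ range k, (u - c j) := by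
  have hdeg : p.degree < #(range (m + 1)) := by
    rw [card_range]
    exact degree_le_natDegree.trans_lt (by exact_mod_cast Nat.lt_succ_of_le hp)
  have hswap := sum_Ico_Ico_comm 0 (m + 1) fun i k =>
    p.eval (c i) * ((∏ j ∈ range k, (u - c j)) / ∏ j ∈ (range (k + 1)).erase i, (c i - c j))
  simp only [← range_eq_Ico] at hswap
  conv_lhs => rw [Lagrange.eq_interpolate hc hdeg]
  simp only [Lagrange.interpolate_apply, eval_finsetSum, eval_mul, eval_C, Lagrange.eval_basis]
  rw [sum_congr rfl fun i hi => by
    rw [prod_erase_div_eq_sum_Ico c u (mem_range_succ_iff.1 hi) hc, mul_sum], hswap]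
  refine sum_congr rfl fun k _ => ?_
  rw [divDiff, sum_mul]
  exact sum_congr rfl fun i _ => by ring

end Newton

section Pochhammer

theorem Ring.choose_mul_factorial {K : Type*} [Field K] [CharZero K] (a : K) (n : ℕ) :
    Ring.choose a n * n.factorial = ∏ j ∈ range n, (a - j) := by
  rw [← descPochhammer_eval_eq_prod_range, ← descPochhammer_map (algebraMap ℤ K),
    eval_map_algebraMap, aeval_eq_smeval, Ring.descPochhammer_eq_factorial_smul_choose,
    nsmul_eq_mul, mul_comm]

variable {R : Type*} [CommRing R]

theorem prod_range_add_sub (a : R) (m n : ℕ) :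
    ∏ j ∈ range (m + n), (a - j) =
      (∏ j ∈ range m, (a - j)) * ∏ j ∈ range n, (a - m - j) := by
  rw [prod_range_add]
  congr 1
  exact prod_congr rfl fun j _ => by push_cast; ring

theorem prod_range_succ_sub_reflect (a : R) (n : ℕ) :
    ∏ j ∈ range (n + 1), (a - n + j) = ∏ j ∈ range (n + 1), (a - j) := by
  rw [← prod_range_reflect]
  refine prod_congr rfl fun j hj => ?_
  rw [Nat.cast_sub (by simpa [Nat.lt_succ_iff] using hj)]
  push_cast
  ring

theorem prod_erase_natCast_sub {i k : ℕ} (hik : i ≤ k) :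
    ∏ j ∈ (range (k + 1)).erase i, ((j : R) - i) =
      (-1) ^ i * i.factorial * (k - i).factorial := by
  have hsplit : (range (k + 1)).erase i = range i ∪ Ico (i + 1) (k + 1) := by
    ext j
    simp only [mem_erase, mem_range, mem_union, mem_Ico]
    omega
  have hbelow : ∏ j ∈ range i, ((j : R) - i) = (-1) ^ i * i.factorial := by
    simp_rw [← neg_sub (i : R), prod_neg, card_range, ← descPochhammer_eval_eq_prod_range,
      descPochhammer_eval_eq_descFactorial, Nat.descFactorial_self]
  have habove : ∏ j ∈ Ico (i + 1) (k + 1), ((j : R) - i) = (k - i).factorial := by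
    rw [prod_Ico_eq_prod_range, show k + 1 - (i + 1) = k - i by omega,
      ← prod_range_add_one_eq_factorial, Nat.cast_prod]
    exact prod_congr rfl fun j _ => by push_cast; ring
  rw [hsplit, prod_union (disjoint_left.2 fun j hj hj' => by
    simp only [mem_range, mem_Ico] at hj hj'; omega), hbelow,
    habove]

theorem choose_mul_choose_mul_div_prod {K : Type*} [Field K] [CharZero K] (N : K) {i k : ℕ}
    (hik : i ≤ k) (hN : ∏ j ∈ range (2 * k + 1), (N - 2 * k + j) ≠ 0) :
    Ring.choose N i * Ring.choose (2 * k - N) (k - i) * (N - 2 * i) /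
        ∏ j ∈ range (2 * k + 1), (N - 2 * k + j) =
      (-1) ^ k / ∏ j ∈ (range (k + 1)).erase i, ((j - i) * (N - i - j)) := by
  set d := k - i
  have hkd : (k : K) = i + d := by rw [← Nat.cast_add, Nat.add_sub_of_le hik]
  set A := ∏ j ∈ range i, (N - j)
  set B := ∏ j ∈ range (k + 1), (N - i - j)
  set C := ∏ j ∈ range d, (N - (i + (k + 1) : ℕ) - j)
  set E := ∏ j ∈ (range (k + 1)).erase i, (N - i - j)
  have hpoch : ∏ j ∈ range (2 * k + 1), (N - 2 * k + j) = A * B * C := by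
    have hreflect := prod_range_succ_sub_reflect N (2 * k)
    push_cast at hreflect
    rw [hreflect, show 2 * k + 1 = i + (k + 1) + d by omega, prod_range_add_sub,
      prod_range_add_sub]
  have hB : B = (N - 2 * i) * E := by
    rw [two_mul, sub_add_eq_sub_sub]
    exact (mul_prod_erase _ (fun j : ℕ => N - i - j) (mem_range.2 (by omega))).symm
  have hA : Ring.choose N i * i.factorial = A := Ring.choose_mul_factorial N i
  have hC : Ring.choose (2 * k - N) d * d.factorial = (-1) ^ d * C := by
    rw [← neg_sub, Ring.choose_neg, Units.smul_def, zsmul_eq_mul, Int.coe_negOnePow,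
      Int.natAbs_natCast, mul_assoc, Ring.choose_mul_factorial]
    congr 1
    refine prod_congr rfl fun j _ => ?_
    push_cast
    rw [hkd]
    ring
  have hden : ∏ j ∈ (range (k + 1)).erase i, (((j : K) - i) * (N - i - j)) =
      (-1) ^ i * i.factorial * d.factorial * E := by
    rw [prod_mul_distrib, prod_erase_natCast_sub hik]
  have hi : (i.factorial : K) ≠ 0 := Nat.cast_ne_zero.2 (Nat.factorial_ne_zero _)
  have hd : (d.factorial : K) ≠ 0 := Nat.cast_ne_zero.2 (Nat.factorial_ne_zero _)
  rw [hpoch, hB] at hN ⊢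
  simp only [mul_ne_zero_iff] at hN
  obtain ⟨⟨hA0, h2i, hE⟩, hC0⟩ := hN
  rw [hden, eq_div_of_mul_eq hi hA, eq_div_of_mul_eq hd hC, show k = i + d by omega, pow_add]
  field_simp

end Pochhammer

def interpolationNode (n r i : ℕ) : ℚ := ((n : ℚ) - i) ^ 2 + r * ((n : ℚ) - i)

theorem interpolationNode_sub (n r i j : ℕ) :
    interpolationNode n r i - interpolationNode n r j = (j - i) * (2 * n + r - i - j) := by
  unfold interpolationNode
  ring

theorem injOn_interpolationNode {n r m : ℕ} (hm : 2 * m < 2 * n + r) :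
    Set.InjOn (interpolationNode n r) (range (m + 1)) := by
  intro i hi j hj hij
  simp only [coe_range, Set.mem_Iio] at hi hj
  have hlt : (i : ℚ) + j < 2 * n + r := by exact_mod_cast (show i + j < 2 * n + r by omega)
  rw [← sub_eq_zero, interpolationNode_sub, mul_eq_zero] at hij
  rcases hij with h | h
  · exact_mod_cast (sub_eq_zero.1 h).symm
  · linarith

theorem alphaCoeff_eq_neg_one_pow_mul_divDiff {m n r k : ℕ} (hk : 2 * k < 2 * n + r) :
    alphaCoeff m n r k = (-1) ^ k * divDiff (· ^ m) (interpolationNode n r) k := by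
  have hpoch : ∏ j ∈ range (2 * k + 1), (2 * (n : ℚ) + r - 2 * k + j) ≠ 0 := by
    have hpos : (2 * k : ℚ) < 2 * n + r := by exact_mod_cast hk
    exact prod_ne_zero_iff.2 fun j _ => by positivity
  rw [alphaCoeff, divDiff, mul_sum]
  refine sum_congr rfl fun i hi => ?_
  have hchoose : ((2 * n + r).choose i : ℚ) = Ring.choose (2 * (n : ℚ) + r) i := by
    rw [← Ring.choose_natCast]
    push_cast
    rfl
  have hchoose' : ((Ring.choose ((2 * k : ℤ) - 2 * n - r) (k - i) : ℤ) : ℚ) =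
      Ring.choose (2 * k - (2 * (n : ℚ) + r)) (k - i) := by
    rw [← eq_intCast (Int.castRingHom ℚ), Ring.map_choose, eq_intCast]
    congr 1
    push_cast
    ring
  have key := choose_mul_choose_mul_div_prod (2 * (n : ℚ) + r) (mem_range_succ_iff.1 hi) hpoch
  simp only [interpolationNode_sub]
  rw [hchoose, hchoose']
  calc _ = Ring.choose (2 * (n : ℚ) + r) i * Ring.choose (2 * k - (2 * (n : ℚ) + r)) (k - i) *
        (2 * n + r - 2 * i) / (∏ j ∈ range (2 * k + 1), (2 * (n : ℚ) + r - 2 * k + j)) *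
        interpolationNode n r i ^ m := by
        unfold interpolationNode
        ring
    _ = _ := by rw [key]; ring

theorem newton_interpolation_xm_general (n m r : ℕ) (hm : 2 * m < 2 * n + r) (x : ℚ) :
    x ^ m * (x + r) ^ m
      = ∑ k ∈ Finset.range (m + 1),
          alphaCoeff m n r k *
            ∏ i ∈ Finset.range k, (((n : ℚ) - x - i) * ((n : ℚ) + x + r - i)) := by
  have hnewton := eval_eq_sum_divDiff_mul_prod (natDegree_X_pow_le m)
    (injOn_interpolationNode hm) (x * (x + r))
  simp only [eval_pow, eval_X] at hnewton
  have hfactor (i : ℕ) : ((n : ℚ) - x - i) * (n + x + r - i) =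
      -(x * (x + r) - interpolationNode n r i) := by
    unfold interpolationNode
    ring
  rw [← mul_pow, hnewton]
  refine sum_congr rfl fun k hk => ?_
  rw [alphaCoeff_eq_neg_one_pow_mul_divDiff (by rw [mem_range] at hk; omega),
    prod_congr rfl fun i _ => hfactor i, prod_neg, card_range, mul_mul_mul_comm, ← mul_pow,
    neg_one_mul, neg_neg, one_pow, one_mul]

theorem newton_interpolation_xm (n m r : ℕ) (hn : 1 ≤ n) (hm : 2 * m < 2 * n + r) (x : ℚ) :
    x ^ m * (x + r) ^ m
      = ∑ k ∈ Finset.range (m + 1),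
          alphaCoeff m n r k *
            ∏ i ∈ Finset.range k, (((n : ℚ) - x - i) * ((n : ℚ) + x + r - i)) :=
  newton_interpolation_xm_general n m r hm x
end

section
/- Let m ≥ 3 and let n_1, …, n_m be positive integers with the conventions n_{m+1} = n_1 and λ_0 = n_1. Then 2 · Σ_{k=1}^{n_1} k · Π_{i=1}^{m} C(n_i + n_{i+1}, n_i + k) = n_1 · C(n_1 + n_m, n_1) · Σ_{λ} C(λ_{m-2} + n_m - 1, λ_{m-2}) · Π_{i=1}^{m-2} C(λ_{i-1} - 1, λ_i - 1) · C(n_{i+1} + n_{i+2}, n_{i+1} - λ_i), where the outer sum on the right is over all sequences λ = (λ_1, …, λ_{m-2}) of positive integers with n_1 ≥ λ_1 ≥ λ_2 ≥ ⋯ ≥ λ_{m-2} ≥ 1, and C(a, b) is interpreted as 0 when b < 0. -/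
/-!
Put `p = n₁`, `c = n_m`, and read the left side as the first moment of the cycle
`(p, n₂, …, n_m)`. For `1 ≤ k ≤ p`, trinomial rearrangements and Vandermonde's identity give
`C(p+n₂, p+k) C(n₂+n₃, n₂+k) C(c+p, c+k)
  = ∑_{l=1}^{p} C(p+c, p-l) C(n₂+n₃, n₃+l) C(l+n₃, l+k) C(c+l, c+k)`,
which writes the moment of the cycle as a combination of the moments of the shorter cycles
`(l, n₃, …, n_m)`. As `C(p+c, p-l) · l C(l+c, l) = p C(p+c, p) C(p-1, l-1)`, the coefficients
are those with which the sum over `λ` splits according to `λ₁ = l`, so induction on `m` reduces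
the claim to `m = 2`. There, with `b = n₂`, `(p+k)(b+k) C(p+b, p+k) C(p+b, b+k)` drops by
`2k(p+b) C(p+b, p+k) C(p+b, b+k)` from `k` to `k + 1`, and the sum telescopes.
-/

open Finset

/-- Extension of a tuple `(λ_1, …, λ_{m-2})` (encoded as `lam : Fin (m-2) → ℕ`) to a function
on `ℕ` with the convention `λ_0 = n_1`; `lamExt m n1 lam i` is `λ_i` for `0 ≤ i ≤ m-2`. -/
def lamExt (m n1 : ℕ) (lam : Fin (m - 2) → ℕ) : ℕ → ℕ :=
  fun i => if i = 0 then n1 else if h : i - 1 < m - 2 then lam ⟨i - 1, h⟩ else 0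

namespace Nat

theorem ite_choose_sub_eq_choose_add (a b l : ℕ) :
    (if l ≤ a then (a + b).choose (a - l) else 0) = (a + b).choose (b + l) := by
  split_ifs
  · exact choose_symm_of_eq_add (by omega)
  · exact (choose_eq_zero_of_lt (by omega)).symm

theorem choose_sub_mul_choose_add {p c k l : ℕ} (hkl : k ≤ l) (hlp : l ≤ p) :
    (p + c).choose (p - l) * (c + l).choose (c + k) =
      (c + p).choose (c + k) * (p - k).choose (l - k) := by
  rw [choose_symm_of_eq_add (show p + c = p - l + (c + l) by omega), choose_mul (by omega),
    show p + c - (c + k) = p - k by omega, show c + l - (c + k) = l - k by omega, add_comm p c]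

theorem choose_add_mul_choose_add {a b k : ℕ} (hkb : k ≤ b) (l : ℕ) :
    (a + b).choose (b + l) * (l + b).choose (l + k) =
      (a + b).choose (a + k) * (a + k).choose (l + k) := by
  rw [choose_symm_of_eq_add (show l + b = l + k + (b - k) by omega), add_comm l b,
    choose_mul (by omega), choose_symm_of_eq_add (show a + b = b - k + (a + k) by omega),
    show a + b - (b - k) = a + k by omega, show b + l - (b - k) = l + k by omega]

theorem sum_range_choose_mul_choose_add (q r s : ℕ) :
    ∑ i ∈ range (q + 1), q.choose i * r.choose (i + s) = (q + r).choose (q + s) := by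
  rw [← sum_range_reflect, add_choose_eq, Nat.sum_antidiagonal_eq_sum_range_succ_mk,
    ← sum_subset (range_subset_range.2 (show q + 1 ≤ q + s + 1 by omega))]
  · refine sum_congr rfl fun i hi => ?_
    rw [mem_range] at hi
    rw [show q + 1 - 1 - i = q - i by omega, choose_symm (by omega),
      show q - i + s = q + s - i by omega]
  · intro i _ hi
    rw [mem_range] at hi
    rw [choose_eq_zero_of_lt (by omega), zero_mul]

theorem sum_Icc_choose_mul_choose_add {k p : ℕ} (hkp : k ≤ p) (a : ℕ) :
    ∑ l ∈ Icc k p, (p - k).choose (l - k) * (a + k).choose (l + k) =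
      (p + a).choose (p + k) := by
  obtain ⟨q, rfl⟩ := exists_add_of_le hkp
  rw [← Ico_add_one_right_eq_Icc, sum_Ico_eq_sum_range, show k + q + 1 - k = q + 1 by omega]
  simp only [add_tsub_cancel_left, show ∀ i, k + i + k = i + 2 * k from fun i => by omega]
  rw [sum_range_choose_mul_choose_add]
  congr 1; omega

theorem choose_sub_mul_mul_choose {p c l : ℕ} (hl : 1 ≤ l) (hlp : l ≤ p) :
    (p + c).choose (p - l) * (l * (l + c).choose l) =
      p * (p + c).choose p * (p - 1).choose (l - 1) := by
  have h := choose_sub_mul_choose_add (c := c) (zero_le l) hlp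
  simp only [add_zero, tsub_zero] at h
  have habs : p.choose l * l = p * (p - 1).choose (l - 1) := by
    obtain ⟨l, rfl⟩ := exists_add_of_le hl
    obtain ⟨p, rfl⟩ := exists_add_of_le (hl.trans hlp)
    simpa [add_comm 1] using (add_one_mul_choose_eq p l).symm
  calc (p + c).choose (p - l) * (l * (l + c).choose l)
      = ((p + c).choose (p - l) * (c + l).choose c) * l := by
        rw [choose_symm_add, add_comm l c]; ring
    _ = (p + c).choose p * (p.choose l * l) := by
        rw [h, add_comm c p, ← choose_symm_add]; ring
    _ = _ := by rw [habs]; ring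

theorem choose_mul_choose_mul_choose_eq_sum {k p : ℕ} (hk : 1 ≤ k) (hkp : k ≤ p)
    (a b c : ℕ) :
    (p + a).choose (p + k) * (a + b).choose (a + k) * (c + p).choose (c + k) =
      ∑ l ∈ Icc 1 p, (p + c).choose (p - l) * (a + b).choose (b + l) *
        ((l + b).choose (l + k) * (c + l).choose (c + k)) := by
  rcases lt_or_ge b k with hbk | hkb
  · rw [choose_eq_zero_of_lt (by omega : a + b < a + k), mul_zero, zero_mul]
    refine (sum_eq_zero fun l _ => ?_).symm
    rw [choose_eq_zero_of_lt (by omega : l + b < l + k), zero_mul, mul_zero]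
  have hsub : Icc k p ⊆ Icc 1 p := Icc_subset_Icc_left hk
  rw [← sum_subset hsub fun l hl hlk => ?vanish]
  case vanish =>
    simp only [mem_Icc, not_and, not_le] at hl hlk
    rw [choose_eq_zero_of_lt (by omega : c + l < c + k), mul_zero, mul_zero]
  calc (p + a).choose (p + k) * (a + b).choose (a + k) * (c + p).choose (c + k)
      = (c + p).choose (c + k) * (a + b).choose (a + k) *
          ∑ l ∈ Icc k p, (p - k).choose (l - k) * (a + k).choose (l + k) := by
        rw [sum_Icc_choose_mul_choose_add hkp]; ring
    _ = _ := by
        rw [mul_sum]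
        refine sum_congr rfl fun l hl => ?_
        rw [mem_Icc] at hl
        calc (c + p).choose (c + k) * (a + b).choose (a + k) *
              ((p - k).choose (l - k) * (a + k).choose (l + k))
            = ((c + p).choose (c + k) * (p - k).choose (l - k)) *
                ((a + b).choose (a + k) * (a + k).choose (l + k)) := by ring
          _ = _ := by
            rw [← choose_sub_mul_choose_add hl.1 hl.2, ← choose_add_mul_choose_add hkb]; ring

theorem choose_mul_choose_telescope_step (a b k : ℕ) :
    (a + k) * (b + k) * ((a + b).choose (a + k) * (a + b).choose (b + k)) =
      (a + (k + 1)) * (b + (k + 1)) *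
          ((a + b).choose (a + (k + 1)) * (a + b).choose (b + (k + 1))) +
        2 * k * (a + b) * ((a + b).choose (a + k) * (a + b).choose (b + k)) := by
  simp only [← add_assoc]
  rcases lt_or_ge b k with hbk | hkb
  · rw [choose_eq_zero_of_lt (by omega : a + b < a + k),
      choose_eq_zero_of_lt (by omega : a + b < a + k + 1)]
    ring
  rcases lt_or_ge a k with hak | hka
  · rw [choose_eq_zero_of_lt (by omega : a + b < b + k),
      choose_eq_zero_of_lt (by omega : a + b < b + k + 1)]
    ring
  have ha := choose_succ_right_eq (a + b) (a + k)
  have hb := choose_succ_right_eq (a + b) (b + k)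
  rw [show a + b - (a + k) = b - k by omega] at ha
  rw [show a + b - (b + k) = a - k by omega] at hb
  have key : (a + k) * (b + k) = (b - k) * (a - k) + 2 * k * (a + b) := by
    zify [hka, hkb]; ring
  calc _ = ((b - k) * (a - k) + 2 * k * (a + b)) *
          ((a + b).choose (a + k) * (a + b).choose (b + k)) := by rw [key]
    _ = ((a + b).choose (a + k) * (b - k)) * ((a + b).choose (b + k) * (a - k)) +
          2 * k * (a + b) * ((a + b).choose (a + k) * (a + b).choose (b + k)) := by ring
    _ = _ := by rw [← ha, ← hb]; ring

theorem two_mul_sum_mul_choose_mul_choose (a b : ℕ) :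
    2 * ∑ k ∈ Icc 1 a, k * ((a + b).choose (a + k) * (b + a).choose (b + k)) =
      a * (a + b).choose a * (a + b - 1).choose a := by
  set G : ℕ → ℕ := fun k => (a + b).choose (a + k) * (a + b).choose (b + k)
  set F : ℕ → ℕ := fun k => (a + k) * (b + k) * G k
  have htel : ∀ t, (a + b) * (2 * ∑ k ∈ Icc 1 t, k * G k) + F (t + 1) = F 1 := by
    intro t
    induction t with
    | zero => simp
    | succ t ih =>
      rw [sum_Icc_succ_top (by omega), ← ih]
      simp only [F, G]
      rw [choose_mul_choose_telescope_step a b (t + 1)]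
      ring
  have hFa : F (a + 1) = 0 := by
    simp only [F, G, choose_eq_zero_of_lt (by omega : a + b < b + (a + 1)), mul_zero]
  rcases Nat.eq_zero_or_pos a with rfl | ha
  · simp
  obtain ⟨N, hN⟩ : ∃ N, a + b = N + 1 := ⟨a + b - 1, by omega⟩
  have hF1 : F 1 = (a + b) * (a * (a + b).choose a * (a + b - 1).choose a) := by
    have ha1 : (a + b).choose (a + 1) * (a + 1) = (a + b) * (a + b - 1).choose a := by
      rw [hN, add_tsub_cancel_right]; exact (add_one_mul_choose_eq N a).symm
    have hb1 : (a + b).choose (b + 1) * (b + 1) = (a + b).choose a * a := by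
      rw [choose_succ_right_eq, add_tsub_cancel_right, ← choose_symm_add]
    calc F 1 = (a + b).choose (a + 1) * (a + 1) * ((a + b).choose (b + 1) * (b + 1)) := by
          simp only [F, G]; ring
      _ = _ := by rw [ha1, hb1]; ring
  apply Nat.eq_of_mul_eq_mul_left (show 0 < a + b by omega)
  rw [add_comm b a, ← hF1, ← htel a, hFa, add_zero]

end Nat

def antitoneTuples (j p : ℕ) : Finset (Fin j → ℕ) :=
  Finset.filter (fun lam : Fin j → ℕ => ∀ a b : Fin j, a ≤ b → lam b ≤ lam a)
    (Fintype.piFinset fun _ : Fin j => Finset.Icc 1 p)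

theorem cons_mem_antitoneTuples_succ {j p x : ℕ} {lam : Fin j → ℕ} :
    Fin.cons x lam ∈ antitoneTuples (j + 1) p ↔
      x ∈ Icc 1 p ∧ lam ∈ antitoneTuples j x := by
  simp only [antitoneTuples, mem_filter, Fintype.mem_piFinset, Fin.forall_fin_succ, Fin.cons_zero,
    Fin.cons_succ, mem_Icc, Fin.succ_le_succ_iff, le_refl, true_imp_iff, Fin.zero_le,
    Fin.le_zero_iff, Fin.succ_ne_zero, false_imp_iff]
  constructor
  · rintro ⟨⟨hx, hlam⟩, ⟨-, hle⟩, hanti⟩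
    exact ⟨hx, fun i => ⟨(hlam i).1, hle i⟩, fun a b => (hanti a).2 b⟩
  · rintro ⟨hx, hlam, hanti⟩
    exact ⟨⟨hx, fun i => ⟨(hlam i).1, (hlam i).2.trans hx.2⟩⟩,
      ⟨trivial, fun i => (hlam i).2⟩, fun a => ⟨trivial, hanti a⟩⟩

theorem sum_antitoneTuples_succ {M : Type*} [AddCommMonoid M] (j p : ℕ)
    (f : (Fin (j + 1) → ℕ) → M) :
    ∑ lam ∈ antitoneTuples (j + 1) p, f lam =
      ∑ x ∈ Icc 1 p, ∑ lam ∈ antitoneTuples j x, f (Fin.cons x lam) := by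
  rw [← sum_sigma (Icc 1 p) (antitoneTuples j) fun q => f (Fin.cons q.1 q.2)]
  refine sum_nbij' (fun lam => ⟨lam 0, Fin.tail lam⟩) (fun q => Fin.cons q.1 q.2) ?_ ?_ ?_ ?_ ?_
  · intro lam hlam
    rw [← Fin.cons_self_tail lam, cons_mem_antitoneTuples_succ] at hlam
    simpa using hlam
  · rintro ⟨x, lam⟩ h
    simpa [cons_mem_antitoneTuples_succ] using h
  · intro lam _; exact Fin.cons_self_tail lam
  · rintro ⟨x, lam⟩ _; simp
  · intro lam _; simp

theorem lamExt_zero (m p : ℕ) (lam : Fin (m - 2) → ℕ) : lamExt m p lam 0 = p := rfl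

theorem lamExt_cons_succ (j p x : ℕ) (lam : Fin j → ℕ) (i : ℕ) :
    lamExt (j + 1 + 2) p (Fin.cons x lam) (i + 1) = lamExt (j + 2) x lam i := by
  rcases i with _ | i
  · simp [lamExt]
  · simp only [lamExt, add_tsub_cancel_right, add_eq_zero, one_ne_zero, and_false, if_false]
    split_ifs <;> first | omega | rfl

theorem Finset.prod_Icc_one_succ {M : Type*} [CommMonoid M] (f : ℕ → M) (j : ℕ) :
    ∏ i ∈ Icc 1 (j + 1), f i = f 1 * ∏ i ∈ Icc 1 j, f (i + 1) := by
  rw [← Ico_add_one_right_eq_Icc, ← Ico_add_one_right_eq_Icc,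
    prod_eq_prod_Ico_succ_bot (by omega), prod_Ico_add']

def lamTerm (j : ℕ) (n : ℕ → ℕ) (p : ℕ) (lam : Fin j → ℕ) : ℕ :=
  (lamExt (j + 2) p lam j + n (j + 2) - 1).choose (lamExt (j + 2) p lam j) *
    ∏ i ∈ Icc 1 j, (lamExt (j + 2) p lam (i - 1) - 1).choose (lamExt (j + 2) p lam i - 1) *
      (if lamExt (j + 2) p lam i ≤ n (i + 1) then
        (n (i + 1) + n (i + 2)).choose (n (i + 1) - lamExt (j + 2) p lam i) else 0)

def lamSum (j : ℕ) (n : ℕ → ℕ) (p : ℕ) : ℕ :=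
  ∑ lam ∈ antitoneTuples j p, lamTerm j n p lam

theorem lamSum_zero (n : ℕ → ℕ) (p : ℕ) : lamSum 0 n p = (p + n 2 - 1).choose p := by
  have : antitoneTuples 0 p = univ :=
    eq_univ_of_forall fun lam => by simp [antitoneTuples, eq_iff_true_of_subsingleton]
  simp [lamSum, this, lamTerm, lamExt_zero]

theorem lamTerm_cons (j : ℕ) (n : ℕ → ℕ) (p x : ℕ) (lam : Fin j → ℕ) :
    lamTerm (j + 1) n p (Fin.cons x lam) =
      (p - 1).choose (x - 1) * (n 2 + n 3).choose (n 3 + x) *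
        lamTerm j (fun i => n (i + 1)) x lam := by
  have hext := lamExt_cons_succ j p x lam
  have hext' : ∀ i ∈ Icc 1 j,
      lamExt (j + 1 + 2) p (Fin.cons x lam) i = lamExt (j + 2) x lam (i - 1) :=
    fun i hi => by rw [← hext, Nat.sub_add_cancel (mem_Icc.1 hi).1]
  simp only [lamTerm, prod_Icc_one_succ, hext, Nat.add_sub_cancel, Nat.sub_self, lamExt_zero,
    Nat.ite_choose_sub_eq_choose_add]
  rw [mul_left_comm]
  congr 2
  refine prod_congr rfl fun i hi => ?_
  rw [hext' i hi]

theorem lamSum_succ (j : ℕ) (n : ℕ → ℕ) (p : ℕ) :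
    lamSum (j + 1) n p =
      ∑ x ∈ Icc 1 p, (p - 1).choose (x - 1) * (n 2 + n 3).choose (n 3 + x) *
        lamSum j (fun i => n (i + 1)) x := by
  simp only [lamSum, sum_antitoneTuples_succ, lamTerm_cons, mul_sum]

def pathProd (j : ℕ) (n : ℕ → ℕ) (k : ℕ) : ℕ :=
  ∏ i ∈ Icc 1 j, (n (i + 1) + n (i + 2)).choose (n (i + 1) + k)

theorem pathProd_succ (j : ℕ) (n : ℕ → ℕ) (k : ℕ) :
    pathProd (j + 1) n k = (n 2 + n 3).choose (n 2 + k) * pathProd j (fun i => n (i + 1)) k :=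
  prod_Icc_one_succ _ j

theorem prod_Icc_choose_cyclic (j : ℕ) (n : ℕ → ℕ) (k : ℕ) :
    ∏ i ∈ Icc 1 (j + 2), (n i + n (if i = j + 2 then 1 else i + 1)).choose (n i + k) =
      (n 1 + n 2).choose (n 1 + k) * pathProd j n k *
        (n (j + 2) + n 1).choose (n (j + 2) + k) := by
  rw [prod_Icc_succ_top (by omega), if_pos rfl, prod_Icc_one_succ, if_neg (by omega), pathProd]
  congr 2
  refine prod_congr rfl fun i hi => ?_
  rw [if_neg (by simp only [mem_Icc] at hi; omega)]

theorem choose_mul_pathProd_succ_mul_choose_eq_sum (j : ℕ) (n : ℕ → ℕ) {k p : ℕ}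
    (hk : 1 ≤ k) (hkp : k ≤ p) (c : ℕ) :
    (p + n 2).choose (p + k) * pathProd (j + 1) n k * (c + p).choose (c + k) =
      ∑ l ∈ Icc 1 p, (p + c).choose (p - l) * (n 2 + n 3).choose (n 3 + l) *
        ((l + n 3).choose (l + k) * pathProd j (fun i => n (i + 1)) k *
          (c + l).choose (c + k)) := by
  calc (p + n 2).choose (p + k) * pathProd (j + 1) n k * (c + p).choose (c + k)
      = pathProd j (fun i => n (i + 1)) k * ((p + n 2).choose (p + k) *
          (n 2 + n 3).choose (n 2 + k) * (c + p).choose (c + k)) := by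
        rw [pathProd_succ]; ring
    _ = _ := by
      rw [Nat.choose_mul_choose_mul_choose_eq_sum hk hkp, mul_sum]
      exact sum_congr rfl fun l _ => by ring

theorem two_mul_sum_mul_pathProd (j : ℕ) (n : ℕ → ℕ) (p : ℕ) :
    2 * ∑ k ∈ Icc 1 p, k * ((p + n 2).choose (p + k) * pathProd j n k *
        (n (j + 2) + p).choose (n (j + 2) + k)) =
      p * (p + n (j + 2)).choose p * lamSum j n p := by
  induction j generalizing n p with
  | zero =>
    have hpath : ∀ k, pathProd 0 n k = 1 := fun k => prod_empty
    simp only [hpath, mul_one, zero_add, lamSum_zero]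
    rw [Nat.two_mul_sum_mul_choose_mul_choose]
  | succ j ih =>
    set c := n (j + 1 + 2)
    set n' : ℕ → ℕ := fun i => n (i + 1)
    have hshorter : ∀ l ∈ Icc 1 p, 2 * ∑ k ∈ Icc 1 p, k * ((l + n 3).choose (l + k) *
        pathProd j n' k * (c + l).choose (c + k)) = l * (l + c).choose l * lamSum j n' l := by
      intro l hl
      rw [mem_Icc] at hl
      rw [← ih n' l, ← sum_subset (Icc_subset_Icc_right hl.2)]
      intro k hk hkl
      rw [mem_Icc] at hk hkl
      rw [Nat.choose_eq_zero_of_lt (by omega : c + l < c + k), mul_zero, mul_zero]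
    calc 2 * ∑ k ∈ Icc 1 p, k * ((p + n 2).choose (p + k) * pathProd (j + 1) n k *
            (c + p).choose (c + k))
        = ∑ l ∈ Icc 1 p, (p + c).choose (p - l) * (n 2 + n 3).choose (n 3 + l) *
            (2 * ∑ k ∈ Icc 1 p, k * ((l + n 3).choose (l + k) * pathProd j n' k *
              (c + l).choose (c + k))) := by
          simp only [mul_sum]
          rw [sum_comm]
          refine sum_congr rfl fun k hk => ?_
          rw [mem_Icc] at hk
          rw [choose_mul_pathProd_succ_mul_choose_eq_sum j n hk.1 hk.2, mul_sum, mul_sum]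
          exact sum_congr rfl fun l _ => by ring
      _ = ∑ l ∈ Icc 1 p, p * (p + c).choose p *
            ((p - 1).choose (l - 1) * (n 2 + n 3).choose (n 3 + l) * lamSum j n' l) := by
          refine sum_congr rfl fun l hl => ?_
          rw [mem_Icc] at hl
          calc _ = (p + c).choose (p - l) * (l * (l + c).choose l) *
                ((n 2 + n 3).choose (n 3 + l) * lamSum j n' l) := by
                rw [hshorter l (mem_Icc.2 hl)]; ring
            _ = _ := by rw [Nat.choose_sub_mul_mul_choose hl.1 hl.2]; ring
      _ = p * (p + c).choose p * lamSum (j + 1) n p := by rw [lamSum_succ, mul_sum]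

theorem catalan_triangle_first_moment_general (m : ℕ) (hm : 3 ≤ m) (n : ℕ → ℕ) :
    2 * ∑ k ∈ Finset.Icc 1 (n 1), k *
        ∏ i ∈ Finset.Icc 1 m, (n i + n (if i = m then 1 else i + 1)).choose (n i + k)
      = n 1 * (n 1 + n m).choose (n 1) *
        ∑ lam ∈ Finset.filter
            (fun lam : Fin (m - 2) → ℕ => ∀ i j : Fin (m - 2), i ≤ j → lam j ≤ lam i)
            (Fintype.piFinset fun _ : Fin (m - 2) => Finset.Icc 1 (n 1)),
          (lamExt m (n 1) lam (m - 2) + n m - 1).choose (lamExt m (n 1) lam (m - 2)) *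
            ∏ i ∈ Finset.Icc 1 (m - 2),
              (lamExt m (n 1) lam (i - 1) - 1).choose (lamExt m (n 1) lam i - 1) *
                (if lamExt m (n 1) lam i ≤ n (i + 1) then
                  (n (i + 1) + n (i + 2)).choose (n (i + 1) - lamExt m (n 1) lam i)
                 else 0) := by
  obtain ⟨j, rfl⟩ : ∃ j, m = j + 2 := ⟨m - 2, by omega⟩
  change _ = n 1 * (n 1 + n (j + 2)).choose (n 1) * lamSum j n (n 1)
  simp only [prod_Icc_choose_cyclic]
  exact two_mul_sum_mul_pathProd j n (n 1)

theorem catalan_triangle_first_moment (m : ℕ) (hm : 3 ≤ m) (n : ℕ → ℕ)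
    (hpos : ∀ i ∈ Finset.Icc 1 m, 0 < n i) :
    2 * ∑ k ∈ Finset.Icc 1 (n 1), k *
        ∏ i ∈ Finset.Icc 1 m, (n i + n (if i = m then 1 else i + 1)).choose (n i + k)
      = n 1 * (n 1 + n m).choose (n 1) *
        ∑ lam ∈ Finset.filter
            (fun lam : Fin (m - 2) → ℕ => ∀ i j : Fin (m - 2), i ≤ j → lam j ≤ lam i)
            (Fintype.piFinset fun _ : Fin (m - 2) => Finset.Icc 1 (n 1)),
          (lamExt m (n 1) lam (m - 2) + n m - 1).choose (lamExt m (n 1) lam (m - 2)) *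
            ∏ i ∈ Finset.Icc 1 (m - 2),
              (lamExt m (n 1) lam (i - 1) - 1).choose (lamExt m (n 1) lam i - 1) *
                (if lamExt m (n 1) lam i ≤ n (i + 1) then
                  (n (i + 1) + n (i + 2)).choose (n (i + 1) - lamExt m (n 1) lam i)
                 else 0) :=
  catalan_triangle_first_moment_general m hm n
end
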